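/- arXiv:math/0512201 — 2 statements merged into one kernel-verified Lean document; each statement's English description precedes it below -/
import Mathlib

section
/- Let p ∈ (0,1), let n be a positive integer, and let (ξ_i)_{i≥1} be i.i.d. random variables with the Binomial(n,p) distribution. Set S_0 = 1 and S_t = 1 + Σ_{i=1}^{t}(ξ_i − 1), fix an integer H > 0, and let γ = min{t ≥ 1 : S_t ≥ H or S_t = 0}. Let Ξ be a set of positive integers such that the event {S_γ ≥ H and γ ∈ Ξ} has positive probability, and let f : ℝ → ℝ be a monotone increasing function. Then E[f(S_γ − H) | S_γ ≥ H, γ ∈ Ξ] ≤ E[f(X)], where X is a Binomial(n,p) random variable. -/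
/-!
Split the event `{S_γ ≥ H, γ ∈ Ξ}` according to the exit time `γ = t + 1` and the level
`s = S_t`. Given that the walk survived up to time `t` at level `s`, an event of `ξ₁, …, ξₜ`, the
exit at time `t + 1` is upward exactly when `ξ_{t+1} ≥ a := H + 1 - s`, and then the overshoot is
`ξ_{t+1} - a`. As `ξ_{t+1} ∼ Bin(n, p)` is independent of the past, everything reduces to
`E[g(X - a); X ≥ a] ≤ P(X ≥ a) E[g(X)]` for `X ∼ Bin(n, p)` and monotone `g`, which follows by
induction on `n` from `Bin(n + 1, p) = (1 - p) Bin(n, p) + p (Bin(n, p) + 1)`.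
-/

open MeasureTheory ProbabilityTheory
open scoped ENNReal

/-- The Binomial(n,p) distribution, as a measure on `ℕ`. -/
noncomputable def binomialMeasure (n : ℕ) (p : ℝ) : Measure ℕ :=
  Measure.sum fun k : ℕ =>
    (ENNReal.ofReal ((n.choose k : ℝ) * p ^ k * (1 - p) ^ (n - k))) • Measure.dirac k

/-- The random walk `S_t = 1 + ∑_{i=1}^t (ξ_i - 1)`. -/
def walk {Ω : Type*} (ξ : ℕ → Ω → ℕ) (t : ℕ) (ω : Ω) : ℤ :=
  1 + ∑ i ∈ Finset.Icc 1 t, ((ξ i ω : ℤ) - 1)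

/-- The stopping time `γ = min {t ≥ 1 : S_t ≥ H or S_t = 0}`. -/
noncomputable def hitTime {Ω : Type*} (ξ : ℕ → Ω → ℕ) (H : ℕ) (ω : Ω) : ℕ :=
  sInf {t | 1 ≤ t ∧ ((H : ℤ) ≤ walk ξ t ω ∨ walk ξ t ω = 0)}

open Function
open scoped unitInterval

theorem Nat.sInf_eq_add_one_iff {S : Set ℕ} {k : ℕ} :
    sInf S = k + 1 ↔ k + 1 ∈ S ∧ ∀ u ≤ k, u ∉ S := by
  constructor
  · intro h
    have hne : S.Nonempty := Nat.nonempty_of_pos_sInf (h ▸ k.succ_pos)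
    exact ⟨h ▸ Nat.sInf_mem hne, fun u hu => Nat.notMem_of_lt_sInf (by omega)⟩
  · rintro ⟨hk, hlt⟩
    exact IsLeast.csInf_eq ⟨hk, fun u hu => by_contra fun h => hlt u (by omega) hu⟩

namespace ProbabilityTheory

theorem binomial_succ (n : ℕ) (p : I) :
    Bin(n + 1, p) =
      ENNReal.ofReal (1 - p) • Bin(n, p) + ENNReal.ofReal p • Bin(n, p).map Nat.succ := by
  have hp0 : (0 : ℝ) ≤ p := p.2.1
  have hp1 : (0 : ℝ) ≤ 1 - p := sub_nonneg.2 p.2.2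
  refine Measure.ext_of_singleton fun k => ?_
  rw [Measure.add_apply, Measure.smul_apply, Measure.smul_apply,
    Measure.map_apply Measurable.of_discrete (measurableSet_singleton k), smul_eq_mul, smul_eq_mul]
  rcases k with _ | k
  · simp [binomial_singleton, ← ENNReal.ofReal_mul hp1, pow_succ', Set.preimage]
  · rw [show Nat.succ ⁻¹' {k + 1} = {k} by ext; simp, binomial_singleton, binomial_singleton,
      binomial_singleton, ← ENNReal.ofReal_mul hp1, ← ENNReal.ofReal_mul hp0,
      ← ENNReal.ofReal_add (by positivity) (by positivity), Nat.choose_succ_succ']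
    congr 1
    rcases le_or_gt n k with hnk | hkn
    · rw [Nat.choose_eq_zero_of_lt (by omega : n < k + 1), Nat.sub_eq_zero_of_le hnk,
        Nat.sub_eq_zero_of_le (by omega : n + 1 ≤ k + 1)]
      push_cast; ring
    · obtain ⟨m, rfl⟩ := Nat.exists_eq_add_of_lt hkn
      rw [show k + m + 1 + 1 - (k + 1) = m + 1 by omega, show k + m + 1 - k = m + 1 by omega,
        show k + m + 1 - (k + 1) = m by omega]
      push_cast; ring

theorem lintegral_binomial_succ (n : ℕ) (p : I) (g : ℕ → ℝ≥0∞) :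
    ∫⁻ k, g k ∂Bin(n + 1, p) =
      ENNReal.ofReal (1 - p) * ∫⁻ k, g k ∂Bin(n, p) +
        ENNReal.ofReal p * ∫⁻ k, g (k + 1) ∂Bin(n, p) := by
  rw [binomial_succ, lintegral_add_measure, lintegral_smul_measure, lintegral_smul_measure,
    lintegral_map .of_discrete Measurable.of_discrete]
  rfl

theorem lintegral_binomial_le_succ (n : ℕ) (p : I) {g : ℕ → ℝ≥0∞} (hg : Monotone g) :
    ∫⁻ k, g k ∂Bin(n, p) ≤ ∫⁻ k, g k ∂Bin(n + 1, p) := by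
  have hsum : ENNReal.ofReal (1 - p) + ENNReal.ofReal p = 1 := by
    rw [← ENNReal.ofReal_add (sub_nonneg.2 p.2.2) p.2.1]; simp
  calc ∫⁻ k, g k ∂Bin(n, p)
      = ENNReal.ofReal (1 - p) * ∫⁻ k, g k ∂Bin(n, p) +
          ENNReal.ofReal p * ∫⁻ k, g k ∂Bin(n, p) := by
        rw [← add_mul, hsum, one_mul]
    _ ≤ _ := by
        rw [lintegral_binomial_succ]
        gcongr with k
        exact hg k.le_succ

theorem lintegral_binomial_indicator_Ici_sub_le (p : I) {g : ℕ → ℝ≥0∞} (hg : Monotone g) :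
    ∀ n a : ℕ, ∫⁻ k, (Set.Ici a).indicator (fun k => g (k - a)) k ∂Bin(n, p) ≤
      Bin(n, p) (Set.Ici a) * ∫⁻ k, g k ∂Bin(n, p)
  | n, 0 => by simp
  | 0, a + 1 => by rw [binomial_zero, lintegral_dirac]; simp
  | n + 1, a + 1 => by
    have hshift : Nat.succ ⁻¹' Set.Ici (a + 1) = Set.Ici a := by ext; simp
    have hshift_indicator : ∀ k, (Set.Ici (a + 1)).indicator (fun k => g (k - (a + 1))) (k + 1) =
        (Set.Ici a).indicator (fun k => g (k - a)) k := by
      intro k; simp [Set.indicator_apply]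
    have htail : Bin(n + 1, p) (Set.Ici (a + 1)) =
        ENNReal.ofReal (1 - p) * Bin(n, p) (Set.Ici (a + 1)) +
          ENNReal.ofReal p * Bin(n, p) (Set.Ici a) := by
      rw [binomial_succ, Measure.add_apply, Measure.smul_apply, Measure.smul_apply,
        Measure.map_apply Measurable.of_discrete measurableSet_Ici, hshift]
      rfl
    calc _ = ENNReal.ofReal (1 - p) *
              ∫⁻ k, (Set.Ici (a + 1)).indicator (fun k => g (k - (a + 1))) k ∂Bin(n, p) +
            ENNReal.ofReal p * ∫⁻ k, (Set.Ici a).indicator (fun k => g (k - a)) k ∂Bin(n, p) := by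
          simp only [lintegral_binomial_succ, hshift_indicator]
      _ ≤ ENNReal.ofReal (1 - p) * (Bin(n, p) (Set.Ici (a + 1)) * ∫⁻ k, g k ∂Bin(n, p))
            + ENNReal.ofReal p * (Bin(n, p) (Set.Ici a) * ∫⁻ k, g k ∂Bin(n, p)) := by
          gcongr
          · exact lintegral_binomial_indicator_Ici_sub_le p hg n (a + 1)
          · exact lintegral_binomial_indicator_Ici_sub_le p hg n a
      _ = Bin(n + 1, p) (Set.Ici (a + 1)) * ∫⁻ k, g k ∂Bin(n, p) := by rw [htail]; ring
      _ ≤ _ := mul_le_mul_right (lintegral_binomial_le_succ n p hg) _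

end ProbabilityTheory

theorem binomialMeasure_eq_binomial {n : ℕ} {p : ℝ} (hp : p ∈ I) :
    binomialMeasure n p = Bin(n, ⟨p, hp⟩) := by
  rw [← Measure.sum_smul_dirac Bin(n, ⟨p, hp⟩)]
  simp only [binomial_singleton]
  rfl

theorem setLIntegral_comp_eq_mul_of_indep {Ω β : Type*} {m : MeasurableSpace Ω}
    [mΩ : MeasurableSpace Ω] [MeasurableSpace β] {μ : Measure Ω} {X : Ω → β} (hm : m ≤ mΩ)
    (hX : Measurable X) (hind : Indep m (MeasurableSpace.comap X ‹_›) μ) {B : Set Ω}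
    (hB : MeasurableSet[m] B) {g : β → ℝ≥0∞} (hg : Measurable g) :
    ∫⁻ ω in B, g (X ω) ∂μ = μ B * ∫⁻ x, g x ∂μ.map X := by
  have key := lintegral_mul_eq_lintegral_mul_lintegral_of_independent_measurableSpace hm
    hX.comap_le hind ((@measurable_one ℝ≥0∞ Ω _ m _).indicator hB) (hg.comp (comap_measurable X))
  simp only [Function.comp_apply] at key
  rw [← lintegral_indicator (hm B hB), lintegral_map hg hX, ← lintegral_indicator_one (hm B hB),
    ← key]
  congr with ω
  by_cases hω : ω ∈ B <;> simp [hω]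

theorem measure_inter_preimage_eq_mul_of_indep {Ω β : Type*} {m : MeasurableSpace Ω}
    [MeasurableSpace Ω] [MeasurableSpace β] {μ : Measure Ω} {X : Ω → β} (hX : Measurable X)
    (hind : Indep m (MeasurableSpace.comap X ‹_›) μ) {B : Set Ω} (hB : MeasurableSet[m] B)
    {E : Set β} (hE : MeasurableSet E) :
    μ (B ∩ X ⁻¹' E) = μ B * μ.map X E := by
  rw [(Indep_iff _ _ _).1 hind B _ hB ⟨E, hE, rfl⟩, Measure.map_apply hX hE]

theorem setLIntegral_iUnion_le_mul {Ω ι : Type*} [MeasurableSpace Ω] [Countable ι]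
    {μ : Measure Ω} {s : ι → Set Ω} (hs : ∀ i, MeasurableSet (s i)) (hd : Pairwise (Disjoint on s))
    {F : Ω → ℝ≥0∞} {c : ℝ≥0∞} (h : ∀ i, ∫⁻ ω in s i, F ω ∂μ ≤ μ (s i) * c) :
    ∫⁻ ω in ⋃ i, s i, F ω ∂μ ≤ μ (⋃ i, s i) * c := by
  rw [lintegral_iUnion hs hd, measure_iUnion hd hs, ← ENNReal.tsum_mul_right]
  exact ENNReal.tsum_le_tsum h

theorem integral_comp_le_of_forall_lintegral_le {Ω : Type*} [MeasurableSpace Ω]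
    {ν : Measure Ω} [IsProbabilityMeasure ν] {ρ : Measure ℕ} [IsProbabilityMeasure ρ]
    {Y : Ω → ℕ} (hY : Measurable Y)
    (hdom : ∀ g : ℕ → ℝ≥0∞, Monotone g → ∫⁻ ω, g (Y ω) ∂ν ≤ ∫⁻ k, g k ∂ρ)
    {f : ℝ → ℝ} (hf : Monotone f) (hfρ : Integrable (fun k : ℕ => f k) ρ) :
    ∫ ω, f (Y ω) ∂ν ≤ ∫ k, f k ∂ρ := by
  -- `f - f 0` is nonnegative on `ℕ`, and its lintegral being finite gives integrability under `ν`.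
  set h : ℕ → ℝ := fun k => f k - f 0
  have h_nonneg : ∀ k, 0 ≤ h k := fun k => sub_nonneg.2 (hf (Nat.cast_nonneg k))
  have hhρ : Integrable h ρ := hfρ.sub (integrable_const _)
  have hdomh : ∫⁻ ω, ENNReal.ofReal (h (Y ω)) ∂ν ≤ ENNReal.ofReal (∫ k, h k ∂ρ) := by
    rw [ofReal_integral_eq_lintegral_ofReal hhρ (ae_of_all _ h_nonneg)]
    exact hdom _ fun j k hjk =>
      ENNReal.ofReal_le_ofReal (sub_le_sub_right (hf (Nat.cast_le.2 hjk)) _)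
  have hYm : AEStronglyMeasurable (fun ω => h (Y ω)) ν :=
    ((Measurable.of_discrete (f := h)).comp hY).aestronglyMeasurable
  have hhν : Integrable (fun ω => h (Y ω)) ν :=
    ⟨hYm, (hasFiniteIntegral_iff_ofReal (ae_of_all _ fun ω => h_nonneg _)).2
      (hdomh.trans_lt ENNReal.ofReal_lt_top)⟩
  have hle : ∫ ω, h (Y ω) ∂ν ≤ ∫ k, h k ∂ρ := by
    rw [integral_eq_lintegral_of_nonneg_ae (ae_of_all _ fun ω => h_nonneg _) hYm]
    exact ENNReal.toReal_le_of_le_ofReal (integral_nonneg h_nonneg) hdomh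
  calc ∫ ω, f (Y ω) ∂ν = ∫ ω, (h (Y ω) + f 0) ∂ν := by simp [h]
    _ = ∫ ω, h (Y ω) ∂ν + f 0 := by rw [integral_add hhν (integrable_const _)]; simp
    _ ≤ ∫ k, h k ∂ρ + f 0 := by gcongr
    _ = ∫ k, (h k + f 0) ∂ρ := by rw [integral_add hhρ (integrable_const _)]; simp
    _ = ∫ k, f k ∂ρ := by simp [h]

section Walk

variable {Ω : Type*} {ξ : ℕ → Ω → ℕ} {H : ℕ}

theorem walk_zero (ξ : ℕ → Ω → ℕ) (ω : Ω) : walk ξ 0 ω = 1 := by simp [walk]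

theorem walk_succ (ξ : ℕ → Ω → ℕ) (t : ℕ) (ω : Ω) :
    walk ξ (t + 1) ω = walk ξ t ω + ξ (t + 1) ω - 1 := by
  rw [walk, walk, Finset.sum_Icc_succ_top (by omega)]
  ring

def hitTimes (ξ : ℕ → Ω → ℕ) (H : ℕ) (ω : Ω) : Set ℕ :=
  {t | 1 ≤ t ∧ ((H : ℤ) ≤ walk ξ t ω ∨ walk ξ t ω = 0)}

def survivedAt (ξ : ℕ → Ω → ℕ) (H t : ℕ) (s : ℤ) : Set Ω :=
  {ω | (∀ u ≤ t, u ∉ hitTimes ξ H ω) ∧ walk ξ t ω = s}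

def upExit (ξ : ℕ → Ω → ℕ) (H t : ℕ) (s : ℤ) : Set Ω :=
  {ω | hitTime ξ H ω = t + 1 ∧ walk ξ t ω = s ∧ (H : ℤ) ≤ walk ξ (t + 1) ω}

-- `toNat` truncates only off the event `H ≤ S_γ`, the only place the overshoot is used.
noncomputable def overshoot (ξ : ℕ → Ω → ℕ) (H : ℕ) (ω : Ω) : ℕ :=
  (walk ξ (hitTime ξ H ω) ω - H).toNat

theorem hitTime_eq_add_one_iff {t : ℕ} {ω : Ω} :
    hitTime ξ H ω = t + 1 ↔ t + 1 ∈ hitTimes ξ H ω ∧ ∀ u ≤ t, u ∉ hitTimes ξ H ω :=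
  Nat.sInf_eq_add_one_iff

theorem walk_le_of_forall_notMem_hitTimes {t : ℕ} {ω : Ω} (h : ∀ u ≤ t, u ∉ hitTimes ξ H ω) :
    walk ξ t ω ≤ H + 1 := by
  rcases t with _ | t
  · simp [walk_zero]
  · have := h (t + 1) le_rfl
    simp only [hitTimes, Set.mem_ofPred_eq, not_and, not_or] at this
    omega

-- `hitTime` is `sInf ∅ = 0` when the walk never exits; but `H ≤ S_0 = 1` makes `1` an exit time.
theorem hitTime_ne_zero {ω : Ω} (h : (H : ℤ) ≤ walk ξ (hitTime ξ H ω) ω) :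
    hitTime ξ H ω ≠ 0 := by
  intro h0
  rw [h0, walk_zero] at h
  have h1 : 1 ∈ hitTimes ξ H ω := ⟨le_rfl, by rw [walk_succ, walk_zero]; omega⟩
  have : 1 ≤ hitTime ξ H ω := (Nat.sInf_mem (s := hitTimes ξ H ω) ⟨1, h1⟩).1
  omega

theorem upExit_eq (t : ℕ) (s : ℤ) :
    upExit ξ H t s = survivedAt ξ H t s ∩ ξ (t + 1) ⁻¹' Set.Ici (H + 1 - s).toNat := by
  ext ω
  simp only [upExit, survivedAt, Set.mem_inter_iff, Set.mem_ofPred_eq, Set.mem_preimage,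
    Set.mem_Ici, hitTime_eq_add_one_iff, hitTimes, walk_succ]
  constructor
  · rintro ⟨⟨-, hsurv⟩, rfl, hH⟩
    exact ⟨⟨hsurv, rfl⟩, by omega⟩
  · rintro ⟨⟨hsurv, rfl⟩, hx⟩
    have := walk_le_of_forall_notMem_hitTimes hsurv
    exact ⟨⟨⟨by omega, by omega⟩, hsurv⟩, rfl, by omega⟩

theorem overshoot_of_mem_upExit {t : ℕ} {s : ℤ} {ω : Ω} (h : ω ∈ upExit ξ H t s) :
    overshoot ξ H ω = ξ (t + 1) ω - (H + 1 - s).toNat := by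
  obtain ⟨hγ, rfl, hH⟩ := h
  have := walk_le_of_forall_notMem_hitTimes (hitTime_eq_add_one_iff.1 hγ).2
  rw [walk_succ] at hH
  rw [overshoot, hγ, walk_succ]
  omega

theorem pairwise_disjoint_upExit :
    Pairwise (Disjoint on fun i : ℕ × ℤ => upExit ξ H i.1 i.2) := by
  rintro ⟨t, s⟩ ⟨t', s'⟩ hne
  refine Set.disjoint_left.2 fun ω ⟨hγ, hs, _⟩ ⟨hγ', hs', _⟩ => hne ?_
  obtain rfl : t = t' := by omega
  exact Prod.ext rfl (hs.symm.trans hs')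

theorem setOf_le_walk_hitTime_eq_iUnion (Ξ : Set ℕ) :
    {ω | (H : ℤ) ≤ walk ξ (hitTime ξ H ω) ω ∧ hitTime ξ H ω ∈ Ξ} =
      ⋃ i : {t // t + 1 ∈ Ξ} × ℤ, upExit ξ H i.1 i.2 := by
  ext ω
  simp only [Set.mem_ofPred_eq, Set.mem_iUnion]
  constructor
  · rintro ⟨hH, hΞ⟩
    obtain ⟨t, ht⟩ := Nat.exists_eq_add_one.2 (Nat.pos_of_ne_zero (hitTime_ne_zero hH))
    exact ⟨⟨⟨t, ht ▸ hΞ⟩, walk ξ t ω⟩, ht, rfl, ht ▸ hH⟩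
  · rintro ⟨⟨⟨t, hΞ⟩, s⟩, hγ, -, hH⟩
    exact ⟨hγ ▸ hH, hγ ▸ hΞ⟩

abbrev stepsUpTo (ξ : ℕ → Ω → ℕ) (t : ℕ) : MeasurableSpace Ω :=
  ⨆ i ∈ Set.Iic t, MeasurableSpace.comap (ξ i) inferInstance

theorem measurable_walk_stepsUpTo {u t : ℕ} (hut : u ≤ t) :
    Measurable[stepsUpTo ξ t] (walk ξ u) := by
  refine Measurable.const_add (Finset.measurable_sum _ fun i hi => ?_) 1
  have hi : i ∈ Set.Iic t := Set.mem_Iic.2 ((Finset.mem_Icc.1 hi).2.trans hut)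
  exact (Measurable.of_discrete (f := fun k : ℕ => (k : ℤ) - 1)).comp
    (Measurable.of_comap_le
      (le_iSup₂ (f := fun i _ => MeasurableSpace.comap (ξ i) inferInstance) i hi))

theorem measurableSet_mem_hitTimes {u t : ℕ} (hut : u ≤ t) :
    MeasurableSet[stepsUpTo ξ t] {ω | u ∈ hitTimes ξ H ω} :=
  measurable_walk_stepsUpTo hut
    (MeasurableSet.of_discrete (s := {z : ℤ | 1 ≤ u ∧ ((H : ℤ) ≤ z ∨ z = 0)}))

theorem measurableSet_forall_notMem_hitTimes (t : ℕ) :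
    MeasurableSet[stepsUpTo ξ t] {ω | ∀ u ≤ t, u ∉ hitTimes ξ H ω} := by
  simp only [Set.ofPred_forall]
  exact .iInter fun u => .iInter fun hu => (measurableSet_mem_hitTimes hu).compl

theorem measurableSet_survivedAt (t : ℕ) (s : ℤ) :
    MeasurableSet[stepsUpTo ξ t] (survivedAt ξ H t s) :=
  (measurableSet_forall_notMem_hitTimes t).inter
    (measurable_walk_stepsUpTo le_rfl (measurableSet_singleton s))

variable [MeasurableSpace Ω]

theorem stepsUpTo_le (hmeas : ∀ i, Measurable (ξ i)) (t : ℕ) :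
    stepsUpTo ξ t ≤ ‹MeasurableSpace Ω› :=
  iSup₂_le fun i _ => (hmeas i).comap_le

theorem measurable_walk (hmeas : ∀ i, Measurable (ξ i)) (t : ℕ) : Measurable (walk ξ t) :=
  (measurable_walk_stepsUpTo le_rfl).mono (stepsUpTo_le hmeas t) le_rfl

theorem indep_stepsUpTo_succ {μ : Measure Ω} (hmeas : ∀ i, Measurable (ξ i))
    (hind : iIndepFun ξ μ) (t : ℕ) :
    Indep (stepsUpTo ξ t) (MeasurableSpace.comap (ξ (t + 1)) inferInstance) μ := by
  have hdisj : Disjoint (Set.Iic t) {t + 1} :=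
    Set.disjoint_singleton_right.2 (Set.notMem_Iic.2 t.lt_succ_self)
  have := indep_iSup_of_disjoint (fun i => (hmeas i).comap_le)
    ((iIndepFun_iff_iIndep _ _ _).1 hind) hdisj
  rwa [iSup_singleton] at this

theorem measurableSet_upExit (hmeas : ∀ i, Measurable (ξ i)) (t : ℕ) (s : ℤ) :
    MeasurableSet (upExit ξ H t s) := by
  rw [upExit_eq]
  exact (stepsUpTo_le hmeas t _ (measurableSet_survivedAt t s)).inter
    (hmeas (t + 1) measurableSet_Ici)

theorem measurable_hitTime (hmeas : ∀ i, Measurable (ξ i)) (H : ℕ) :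
    Measurable (hitTime ξ H) := by
  have hsucc : ∀ t, MeasurableSet (hitTime ξ H ⁻¹' {t + 1}) := fun t => by
    have : hitTime ξ H ⁻¹' {t + 1} =
        {ω | t + 1 ∈ hitTimes ξ H ω} ∩ {ω | ∀ u ≤ t, u ∉ hitTimes ξ H ω} := by
      ext ω; exact hitTime_eq_add_one_iff
    rw [this]
    exact (stepsUpTo_le hmeas _ _ (measurableSet_mem_hitTimes le_rfl)).inter
      (stepsUpTo_le hmeas _ _ (measurableSet_forall_notMem_hitTimes t))
  refine measurable_to_countable' fun k => ?_
  rcases k with _ | t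
  · have : hitTime ξ H ⁻¹' {0} = (⋃ t, hitTime ξ H ⁻¹' {t + 1})ᶜ := by
      ext ω
      simp only [Set.mem_preimage, Set.mem_singleton_iff, Set.mem_compl_iff, Set.mem_iUnion,
        Nat.exists_eq_add_one]
      omega
    rw [this]
    exact (MeasurableSet.iUnion hsucc).compl
  · exact hsucc t

theorem measurable_overshoot (hmeas : ∀ i, Measurable (ξ i)) (H : ℕ) :
    Measurable (overshoot ξ H) := by
  have hwalk : Measurable fun q : Ω × ℕ => walk ξ q.2 q.1 :=
    measurable_from_prod_countable_left fun t => measurable_walk hmeas t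
  exact (Measurable.of_discrete (f := fun z : ℤ => (z - H).toNat)).comp
    (hwalk.comp (measurable_id.prodMk (measurable_hitTime hmeas H)))

variable {μ : Measure Ω} {n : ℕ} {p : I}

theorem setLIntegral_upExit_le (hmeas : ∀ i, Measurable (ξ i)) (hind : iIndepFun ξ μ)
    (hdist : ∀ i, μ.map (ξ i) = Bin(n, p)) {g : ℕ → ℝ≥0∞} (hg : Monotone g) (t : ℕ) (s : ℤ) :
    ∫⁻ ω in upExit ξ H t s, g (overshoot ξ H ω) ∂μ ≤
      μ (upExit ξ H t s) * ∫⁻ k, g k ∂Bin(n, p) := by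
  set a := (H + 1 - s).toNat
  have hle := stepsUpTo_le hmeas t
  have hindep := indep_stepsUpTo_succ hmeas hind t
  have hB := measurableSet_survivedAt (ξ := ξ) (H := H) t s
  have hξ := hmeas (t + 1)
  calc ∫⁻ ω in upExit ξ H t s, g (overshoot ξ H ω) ∂μ
      = ∫⁻ ω in survivedAt ξ H t s,
          (Set.Ici a).indicator (fun k => g (k - a)) (ξ (t + 1) ω) ∂μ := by
        simp only [← Set.indicator_comp_right, Function.comp_def]
        rw [setLIntegral_indicator (hξ measurableSet_Ici), Set.inter_comm, ← upExit_eq]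
        exact setLIntegral_congr_fun (measurableSet_upExit hmeas t s) fun ω hω => by
          rw [overshoot_of_mem_upExit hω]
    _ = μ (survivedAt ξ H t s) *
          ∫⁻ k, (Set.Ici a).indicator (fun k => g (k - a)) k ∂Bin(n, p) := by
        rw [setLIntegral_comp_eq_mul_of_indep hle hξ hindep hB .of_discrete, hdist]
    _ ≤ μ (survivedAt ξ H t s) * (Bin(n, p) (Set.Ici a) * ∫⁻ k, g k ∂Bin(n, p)) :=
        mul_le_mul_right (lintegral_binomial_indicator_Ici_sub_le p hg n a) _
    _ = μ (upExit ξ H t s) * ∫⁻ k, g k ∂Bin(n, p) := by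
        rw [upExit_eq, measure_inter_preimage_eq_mul_of_indep hξ hindep hB measurableSet_Ici, hdist,
          mul_assoc]

theorem setLIntegral_overshoot_le (hmeas : ∀ i, Measurable (ξ i)) (hind : iIndepFun ξ μ)
    (hdist : ∀ i, μ.map (ξ i) = Bin(n, p)) {g : ℕ → ℝ≥0∞} (hg : Monotone g) (Ξ : Set ℕ) :
    ∫⁻ ω in {ω | (H : ℤ) ≤ walk ξ (hitTime ξ H ω) ω ∧ hitTime ξ H ω ∈ Ξ},
        g (overshoot ξ H ω) ∂μ ≤
      μ {ω | (H : ℤ) ≤ walk ξ (hitTime ξ H ω) ω ∧ hitTime ξ H ω ∈ Ξ} * ∫⁻ k, g k ∂Bin(n, p) := by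
  rw [setOf_le_walk_hitTime_eq_iUnion]
  exact setLIntegral_iUnion_le_mul (fun i => measurableSet_upExit hmeas _ _)
    (pairwise_disjoint_upExit.comp_of_injective (Subtype.val_injective.prodMap injective_id))
    fun i => setLIntegral_upExit_le hmeas hind hdist hg _ _

end Walk

theorem overshoot_expectation_le_general {Ω : Type*} [MeasurableSpace Ω] (μ : Measure Ω)
    [IsProbabilityMeasure μ] (n : ℕ) (p : ℝ) (hp0 : 0 < p) (hp1 : p < 1)
    (ξ : ℕ → Ω → ℕ) (hmeas : ∀ i, Measurable (ξ i))
    (hdist : ∀ i, μ.map (ξ i) = binomialMeasure n p)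
    (hindep : iIndepFun ξ μ)
    (H : ℕ) (Ξ : Set ℕ)
    (hpos : 0 < μ {ω | (H : ℤ) ≤ walk ξ (hitTime ξ H ω) ω ∧ hitTime ξ H ω ∈ Ξ})
    (f : ℝ → ℝ) (hf : Monotone f) :
    ∫ ω, f ((walk ξ (hitTime ξ H ω) ω - H : ℤ) : ℝ)
        ∂(μ[|{ω | (H : ℤ) ≤ walk ξ (hitTime ξ H ω) ω ∧ hitTime ξ H ω ∈ Ξ}]) ≤
      ∫ m, f (m : ℝ) ∂(binomialMeasure n p) := by
  set A := {ω | (H : ℤ) ≤ walk ξ (hitTime ξ H ω) ω ∧ hitTime ξ H ω ∈ Ξ} with hA_def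
  rw [binomialMeasure_eq_binomial ⟨hp0.le, hp1.le⟩] at hdist ⊢
  have hA : MeasurableSet A := by
    rw [hA_def, setOf_le_walk_hitTime_eq_iUnion]
    exact .iUnion fun i => measurableSet_upExit hmeas _ _
  have := cond_isProbabilityMeasure (μ := μ) hpos.ne'
  have hov : ∀ᵐ ω ∂μ[|A],
      f ((walk ξ (hitTime ξ H ω) ω - H : ℤ) : ℝ) = f (overshoot ξ H ω) := by
    filter_upwards [ae_cond_mem hA] with ω hω
    rw [overshoot]
    exact congrArg f (by exact_mod_cast (Int.toNat_of_nonneg (sub_nonneg.2 hω.1)).symm)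
  rw [integral_congr_ae hov]
  refine integral_comp_le_of_forall_lintegral_le (measurable_overshoot hmeas H)
    (fun g hg => ?_) hf (integrable_binomial _)
  calc ∫⁻ ω, g (overshoot ξ H ω) ∂μ[|A] = (μ A)⁻¹ * ∫⁻ ω in A, g (overshoot ξ H ω) ∂μ :=
        lintegral_smul_measure _ _
    _ ≤ (μ A)⁻¹ * (μ A * ∫⁻ k, g k ∂Bin(n, ⟨p, hp0.le, hp1.le⟩)) :=
        mul_le_mul_right (setLIntegral_overshoot_le hmeas hindep hdist hg Ξ) _
    _ = ∫⁻ k, g k ∂Bin(n, ⟨p, hp0.le, hp1.le⟩) :=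
        ENNReal.inv_mul_cancel_left hpos.ne' (measure_ne_top μ A)

/-- **Corollary 6, Nachmias–Peres.** For `f` increasing,
`E[f(S_γ - H) | S_γ ≥ H, γ ∈ Ξ] ≤ E[f(X)]` where `X ~ Bin(n,p)`. -/
theorem overshoot_expectation_le {Ω : Type*} [MeasurableSpace Ω] (μ : Measure Ω)
    [IsProbabilityMeasure μ] (n : ℕ) (hn : 0 < n) (p : ℝ) (hp0 : 0 < p) (hp1 : p < 1)
    (ξ : ℕ → Ω → ℕ) (hmeas : ∀ i, Measurable (ξ i))
    (hdist : ∀ i, μ.map (ξ i) = binomialMeasure n p)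
    (hindep : iIndepFun ξ μ)
    (H : ℕ) (hH : 0 < H) (Ξ : Set ℕ) (hΞ : ∀ t ∈ Ξ, 0 < t)
    (hpos : 0 < μ {ω | (H : ℤ) ≤ walk ξ (hitTime ξ H ω) ω ∧ hitTime ξ H ω ∈ Ξ})
    (f : ℝ → ℝ) (hf : Monotone f) :
    ∫ ω, f ((walk ξ (hitTime ξ H ω) ω - H : ℤ) : ℝ)
        ∂(μ[|{ω | (H : ℤ) ≤ walk ξ (hitTime ξ H ω) ω ∧ hitTime ξ H ω ∈ Ξ}]) ≤
      ∫ m, f (m : ℝ) ∂(binomialMeasure n p) :=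
  overshoot_expectation_le_general μ n p hp0 hp1 ξ hmeas hdist hindep H Ξ hpos f hf
end

section
/- Let ξ be a random variable with the Binomial(n,p) distribution, where n is a positive integer and p ∈ (0,1), and let r be an integer with 0 ≤ r ≤ n. Then the conditional distribution of ξ − r given the event {ξ ≥ r} is stochastically dominated by the Binomial(n,p) distribution; that is, for every integer k ≥ 0, P(ξ − r ≥ k | ξ ≥ r) ≤ P(X ≥ k), where X is a Binomial(n,p) random variable. -/
open MeasureTheory ProbabilityTheory
open scoped ENNReal

noncomputable def binomialPMF (p : ℝ) (n j : ℕ) : ℝ :=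
  n.choose j * p ^ j * (1 - p) ^ (n - j)

noncomputable def binomialTail (p : ℝ) (n m : ℕ) : ℝ :=
  ∑ j ∈ Finset.Icc m n, binomialPMF p n j

section

variable {p : ℝ}

lemma binomialPMF_nonneg (hp0 : 0 ≤ p) (hp1 : p ≤ 1) (n j : ℕ) : 0 ≤ binomialPMF p n j := by
  have : 0 ≤ 1 - p := sub_nonneg.mpr hp1
  unfold binomialPMF
  positivity

lemma binomialPMF_eq_zero_of_lt {n j : ℕ} (h : n < j) : binomialPMF p n j = 0 := by
  simp [binomialPMF, Nat.choose_eq_zero_of_lt h]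

lemma binomialPMF_succ_succ (n j : ℕ) :
    binomialPMF p (n + 1) (j + 1) =
      p * binomialPMF p n j + (1 - p) * binomialPMF p n (j + 1) := by
  rcases lt_trichotomy j n with h | rfl | h
  · obtain ⟨d, rfl⟩ := Nat.exists_eq_add_of_lt h
    simp only [binomialPMF, Nat.choose_succ_succ, Nat.cast_add,
      show j + d + 1 + 1 - (j + 1) = d + 1 by omega, show j + d + 1 - j = d + 1 by omega,
      show j + d + 1 - (j + 1) = d by omega]
    ring
  · rw [binomialPMF_eq_zero_of_lt j.lt_succ_self]
    simp only [binomialPMF, Nat.choose_self, Nat.sub_self]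
    ring
  · simp only [binomialPMF_eq_zero_of_lt h, binomialPMF_eq_zero_of_lt (Nat.succ_lt_succ h),
      binomialPMF_eq_zero_of_lt (Nat.lt_succ_of_lt h), mul_zero, add_zero]

lemma binomialTail_eq_sum_Icc {n N : ℕ} (hN : n ≤ N) (m : ℕ) :
    binomialTail p n m = ∑ j ∈ Finset.Icc m N, binomialPMF p n j :=
  Finset.sum_subset (Finset.Icc_subset_Icc_right hN) fun _ hj hj' ↦
    binomialPMF_eq_zero_of_lt (by simp only [Finset.mem_Icc] at hj hj'; omega)

lemma binomialTail_succ_succ (n m : ℕ) :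
    binomialTail p (n + 1) (m + 1) =
      p * binomialTail p n m + (1 - p) * binomialTail p n (m + 1) := by
  have shift (f : ℕ → ℝ) :
      ∑ j ∈ Finset.Icc m n, f (j + 1) = ∑ j ∈ Finset.Icc (m + 1) (n + 1), f j := by
    rw [← Finset.map_add_right_Icc, Finset.sum_map]; rfl
  rw [binomialTail, ← shift, binomialTail_eq_sum_Icc (Nat.le_succ n) (m + 1), ← shift]
  simp only [binomialPMF_succ_succ, Finset.sum_add_distrib, ← Finset.mul_sum, binomialTail]

lemma binomialTail_zero (n : ℕ) : binomialTail p n 0 = 1 := by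
  have := (add_pow p (1 - p) n).symm
  rw [add_sub_cancel, one_pow] at this
  rw [binomialTail, ← Nat.range_succ_eq_Icc_zero, ← this]
  exact Finset.sum_congr rfl fun j _ ↦ by rw [binomialPMF]; ring

lemma binomialTail_nonneg (hp0 : 0 ≤ p) (hp1 : p ≤ 1) (n m : ℕ) : 0 ≤ binomialTail p n m :=
  Finset.sum_nonneg fun j _ ↦ binomialPMF_nonneg hp0 hp1 n j

lemma binomialTail_succ_le (hp0 : 0 ≤ p) (hp1 : p ≤ 1) (n m : ℕ) :
    binomialTail p n (m + 1) ≤ binomialTail p n m :=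
  Finset.sum_le_sum_of_subset_of_nonneg (Finset.Icc_subset_Icc_left m.le_succ)
    fun j _ _ ↦ binomialPMF_nonneg hp0 hp1 n j

lemma binomialTail_le_succ (hp0 : 0 ≤ p) (hp1 : p ≤ 1) (n m : ℕ) :
    binomialTail p n m ≤ binomialTail p (n + 1) m := by
  cases m with
  | zero => rw [binomialTail_zero, binomialTail_zero]
  | succ m =>
    rw [binomialTail_succ_succ]
    nlinarith [binomialTail_succ_le hp0 hp1 n m, binomialTail_nonneg hp0 hp1 n (m + 1)]

lemma binomialTail_add_le_mul (hp0 : 0 ≤ p) (hp1 : p ≤ 1) (n r k : ℕ) :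
    binomialTail p n (r + k) ≤ binomialTail p n r * binomialTail p n k := by
  induction n generalizing r with
  | zero =>
    cases r with
    | zero => rw [binomialTail_zero, zero_add, one_mul]
    | succ r =>
      have hempty : binomialTail p 0 (r + 1 + k) = 0 := by
        rw [binomialTail, Finset.Icc_eq_empty (by omega), Finset.sum_empty]
      rw [hempty]
      exact mul_nonneg (binomialTail_nonneg hp0 hp1 _ _) (binomialTail_nonneg hp0 hp1 _ _)
  | succ n ih =>
    cases r with
    | zero => rw [binomialTail_zero, zero_add, one_mul]
    | succ r =>
      calc binomialTail p (n + 1) (r + 1 + k)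
          = p * binomialTail p n (r + k) + (1 - p) * binomialTail p n (r + 1 + k) := by
            rw [Nat.add_right_comm r 1 k, binomialTail_succ_succ, Nat.add_right_comm r k 1]
        _ ≤ p * (binomialTail p n r * binomialTail p n k)
              + (1 - p) * (binomialTail p n (r + 1) * binomialTail p n k) := by
            gcongr
            exacts [ih r, ih (r + 1)]
        _ = binomialTail p (n + 1) (r + 1) * binomialTail p n k := by
            rw [binomialTail_succ_succ]; ring
        _ ≤ binomialTail p (n + 1) (r + 1) * binomialTail p (n + 1) k :=
            mul_le_mul_of_nonneg_left (binomialTail_le_succ hp0 hp1 n k)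
              (binomialTail_nonneg hp0 hp1 _ _)

lemma binomialMeasure_setOf_le (hp0 : 0 ≤ p) (hp1 : p ≤ 1) (n m : ℕ) :
    binomialMeasure n p {j | m ≤ j} = ENNReal.ofReal (binomialTail p n m) := by
  have hterm (j : ℕ) : ENNReal.ofReal (binomialPMF p n j) * {j | m ≤ j}.indicator 1 j =
      (Finset.Icc m n : Set ℕ).indicator (fun j ↦ ENNReal.ofReal (binomialPMF p n j)) j := by
    by_cases hmj : m ≤ j <;> by_cases hjn : j ≤ n <;>
      simp [hmj, hjn, binomialPMF_eq_zero_of_lt, not_le.mp]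
  simp only [binomialMeasure, Measure.sum_apply _ (DiscreteMeasurableSpace.forall_measurableSet _),
    Measure.smul_apply, Measure.dirac_apply' _ (DiscreteMeasurableSpace.forall_measurableSet _),
    smul_eq_mul]
  rw [binomialTail, ENNReal.ofReal_sum_of_nonneg fun j _ ↦ binomialPMF_nonneg hp0 hp1 n j,
    sum_eq_tsum_indicator]
  exact tsum_congr hterm

end

theorem binomial_conditional_dominated_general {Ω : Type*} [MeasurableSpace Ω] (μ : Measure Ω)
    (n : ℕ) (p : ℝ) (hp0 : 0 < p) (hp1 : p < 1)
    (ξ : Ω → ℕ) (hmeas : Measurable ξ) (hdist : μ.map ξ = binomialMeasure n p)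
    (r : ℕ) (k : ℕ) :
    (μ[|{ω | r ≤ ξ ω}]) {ω | r + k ≤ ξ ω} ≤ binomialMeasure n p {m | k ≤ m} := by
  have htail (m : ℕ) : μ {ω | m ≤ ξ ω} = ENNReal.ofReal (binomialTail p n m) := by
    rw [← binomialMeasure_setOf_le hp0.le hp1.le, ← hdist,
      Measure.map_apply hmeas (DiscreteMeasurableSpace.forall_measurableSet _)]
    rfl
  have hinter : {ω | r ≤ ξ ω} ∩ {ω | r + k ≤ ξ ω} = {ω | r + k ≤ ξ ω} :=
    Set.inter_eq_self_of_subset_right fun _ ↦ (Nat.le_add_right r k).trans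
  rw [cond_apply (measurableSet_le measurable_const hmeas), hinter, htail, htail,
    binomialMeasure_setOf_le hp0.le hp1.le, ← ENNReal.div_eq_inv_mul]
  -- no positivity of `T n r` is needed: in `ℝ≥0∞`, `0 / 0 = 0`
  refine ENNReal.div_le_of_le_mul' ?_
  rw [← ENNReal.ofReal_mul (binomialTail_nonneg hp0.le hp1.le n r)]
  exact ENNReal.ofReal_le_ofReal (binomialTail_add_le_mul hp0.le hp1.le n r k)

/-- If `ξ ~ Bin(n,p)` and `0 ≤ r ≤ n`, the conditional distribution of `ξ - r`
given `ξ ≥ r` is stochastically dominated by Bin(n,p). -/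
theorem binomial_conditional_dominated {Ω : Type*} [MeasurableSpace Ω] (μ : Measure Ω)
    [IsProbabilityMeasure μ] (n : ℕ) (hn : 0 < n) (p : ℝ) (hp0 : 0 < p) (hp1 : p < 1)
    (ξ : Ω → ℕ) (hmeas : Measurable ξ) (hdist : μ.map ξ = binomialMeasure n p)
    (r : ℕ) (hr : r ≤ n) (k : ℕ) :
    (μ[|{ω | r ≤ ξ ω}]) {ω | r + k ≤ ξ ω} ≤ binomialMeasure n p {m | k ≤ m} :=
  binomial_conditional_dominated_general μ n p hp0 hp1 ξ hmeas hdist r k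
end
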